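/- Let α be a global DTL formula, μ ∈ Mod(α), ℓ a linearization of its global causality order, and q₀q₁q₂… the run for w^{μ,ℓ} in D_α with q_k↓_i = x^i_k ∪ y^i_k. Then for every agent i ∈ Id and every formula □φ ∈ closure(α) ∩ L_i, there are infinitely many indices k ∈ ℕ with q_k↓_i ∈ F_{□φ}, where F_{□φ} = {B | □φ ∈ B or φ ∉ B}; consequently each local projected run is accepting in G_i. -/

import Mathlib

set_option autoImplicit false

/-! ## DTL syntax -/

/-- Local formulas of agent `i` over a distributed signature with agents `Id`
and pairwise disjoint local state propositions `Prp i`. -/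
inductive LForm {Id : Type} (Prp : Id → Type) : Id → Type
  | prop {i : Id} : Prp i → LForm Prp i
  | neg {i : Id} : LForm Prp i → LForm Prp i
  | imp {i : Id} : LForm Prp i → LForm Prp i → LForm Prp i
  | next {i : Id} : LForm Prp i → LForm Prp i
  | always {i : Id} : LForm Prp i → LForm Prp i
  | comm {i : Id} (j : Id) : LForm Prp j → LForm Prp i

/-- Global formulas. -/
inductive GForm {Id : Type} (Prp : Id → Type) : Type
  | atf (i : Id) : LForm Prp i → GForm Prp
  | neg : GForm Prp → GForm Prp
  | imp : GForm Prp → GForm Prp → GForm Prp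

/-! ## DTL semantics -/

/-- The data of an interpretation structure: a family of event sets, local orders
and local labelings (one for each agent). -/
structure PreInterp (Id E : Type) (Prp : Id → Type) where
  Ev : Id → Set E
  le : Id → E → E → Prop
  val : (i : Id) → Set E → Set (Prp i)

variable {Id E : Type} {Prp : Id → Type}

/-- A local state of agent `i`: a finite subset of `Ev i` down-closed for the local order. -/
def IsLocalState (μ : PreInterp Id E Prp) (i : Id) (ξ : Set E) : Prop :=
  ξ.Finite ∧ ξ ⊆ μ.Ev i ∧ ∀ e e' : E, μ.le i e e' → e' ∈ ξ → e ∈ ξ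

/-- `e` is the `≤ᵢ`-maximum (the `last` event) of `ξ`. -/
def IsLast (μ : PreInterp Id E Prp) (i : Id) (ξ : Set E) (e : E) : Prop :=
  e ∈ ξ ∧ ∀ e' ∈ ξ, μ.le i e' e

/-- Local satisfaction of local formulas at local states. -/
def LSat (μ : PreInterp Id E Prp) : (i : Id) → LForm Prp i → Set E → Prop
  | i, .prop p, ξ => p ∈ μ.val i ξ
  | i, .neg φ, ξ => ¬ LSat μ i φ ξ
  | i, .imp φ ψ, ξ => LSat μ i φ ξ → LSat μ i ψ ξ
  | i, .next φ, ξ => ∃ e, e ∈ μ.Ev i ∧ e ∉ ξ ∧ IsLocalState μ i (ξ ∪ {e}) ∧ LSat μ i φ (ξ ∪ {e})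
  | i, .always φ, ξ => ∀ ξ' : Set E, IsLocalState μ i ξ' → ξ ⊆ ξ' → LSat μ i φ ξ'
  | i, .comm j φ, ξ => ∃ e, IsLast μ i ξ e ∧ e ∈ μ.Ev j ∧ LSat μ j φ {e' | e' ∈ μ.Ev j ∧ μ.le j e' e}

/-- Global satisfaction of global formulas at global states. -/
def GSat (μ : PreInterp Id E Prp) : GForm Prp → Set E → Prop
  | .atf i φ, ξ => LSat μ i φ (ξ ∩ μ.Ev i)
  | .neg γ, ξ => ¬ GSat μ γ ξ
  | .imp γ δ, ξ => GSat μ γ ξ → GSat μ δ ξ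

/-- The global causality relation: reflexive-transitive cloSet of the union of the
local orders. -/
def gle (μ : PreInterp Id E Prp) : E → E → Prop :=
  Relation.ReflTransGen (fun e e' => ∃ i, μ.le i e e')

/-- The covering (successor) relation of the local order of agent `i`. -/
def LCovers (μ : PreInterp Id E Prp) (i : Id) (e e' : E) : Prop :=
  μ.le i e e' ∧ e ≠ e' ∧ ¬ ∃ e'', μ.le i e e'' ∧ e ≠ e'' ∧ μ.le i e'' e' ∧ e'' ≠ e'

/-- Well-formedness of an interpretation structure: each local life-cycle is a countably
infinite, discrete, well-founded total order on `Ev i`, and the induced global causality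
relation is a partial order. -/
structure IsInterp (μ : PreInterp Id E Prp) : Prop where
  le_mem : ∀ i e e', μ.le i e e' → e ∈ μ.Ev i ∧ e' ∈ μ.Ev i
  refl : ∀ i, ∀ e ∈ μ.Ev i, μ.le i e e
  antisymm : ∀ i e e', μ.le i e e' → μ.le i e' e → e = e'
  trans : ∀ i e e' e'', μ.le i e e' → μ.le i e' e'' → μ.le i e e''
  total : ∀ i, ∀ e ∈ μ.Ev i, ∀ e' ∈ μ.Ev i, μ.le i e e' ∨ μ.le i e' e
  countable : ∀ i, (μ.Ev i).Countable
  infinite : ∀ i, (μ.Ev i).Infinite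
  wf : ∀ i, ∀ S ⊆ μ.Ev i, S.Nonempty → ∃ m ∈ S, ∀ e ∈ S, μ.le i m e
  discrete : ∀ i e e', μ.le i e e' → Relation.ReflTransGen (LCovers μ i) e e'
  glob_antisymm : ∀ e e', gle μ e e' → gle μ e' e → e = e'


/-- The set of models of a global formula `α`: well-formed interpretation structures
globally satisfying `α` at the empty (initial) global state. -/
def ModelsOf (α : GForm Prp) : Set (PreInterp Id E Prp) :=
  {μ | IsInterp μ ∧ GSat μ α ∅}

/-! ## Closure, elementary sets -/

/-- Mixed formulas: global formulas together with local formulas of each agent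
(these are the formulas that may occur in the sets `B ⊆ cloSet(α)`). -/
inductive MForm {Id : Type} (Prp : Id → Type) : Type
  | glob : GForm Prp → MForm Prp
  | loc (i : Id) : LForm Prp i → MForm Prp

/-- Negation on local formulas, identifying `¬¬ψ` with `ψ`. -/
def lneg {i : Id} : LForm Prp i → LForm Prp i
  | .neg φ => φ
  | φ => .neg φ

/-- Negation on global formulas, identifying `¬¬β` with `β`. -/
def gneg : GForm Prp → GForm Prp
  | .neg γ => γ
  | γ => .neg γ

/-- Negation on mixed formulas, identifying `¬¬β` with `β`. -/
def mneg : MForm Prp → MForm Prp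
  | .glob γ => .glob (gneg γ)
  | .loc i φ => .loc i (lneg φ)

/-- `i`-subformulas of a local formula (communication formulas are treated as atomic). -/
def lsubf {i : Id} : LForm Prp i → Set (LForm Prp i)
  | .prop p => {LForm.prop p}
  | .neg φ => insert (LForm.neg φ) (lsubf φ)
  | .imp φ ψ => insert (LForm.imp φ ψ) (lsubf φ ∪ lsubf ψ)
  | .next φ => insert (LForm.next φ) (lsubf φ)
  | .always φ => insert (LForm.always φ) (lsubf φ)
  | .comm j ψ => {LForm.comm j ψ}

/-- Subformulas of a global formula, as mixed formulas. -/
def gsubf : GForm Prp → Set (MForm Prp)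
  | .atf i φ => insert (MForm.glob (GForm.atf i φ)) ((MForm.loc i) '' lsubf φ)
  | .neg γ => insert (MForm.glob (GForm.neg γ)) (gsubf γ)
  | .imp γ δ => insert (MForm.glob (GForm.imp γ δ)) (gsubf γ ∪ gsubf δ)

/-- The cloSet of `α`: all subformulas of `α` and their negations
(`¬¬β` identified with `β`). -/
def cloSet (α : GForm Prp) : Set (MForm Prp) :=
  gsubf α ∪ mneg '' gsubf α

/-- `B↓ᵢ`: the subset of `B` consisting of all global formulas of `B` and the
`i`-local formulas of `B` (no `j`-local formulas for `j ≠ i`). -/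
def proj (B : Set (MForm Prp)) (i : Id) : Set (MForm Prp) :=
  {x ∈ B | (∃ γ : GForm Prp, x = MForm.glob γ) ∨ ∃ φ : LForm Prp i, x = MForm.loc i φ}

/-- The `i`-literals: local state propositions of agent `i` and their negations. -/
def Lit (i : Id) : Set (LForm Prp i) :=
  {φ | (∃ p, φ = LForm.prop p) ∨ ∃ p, φ = LForm.neg (LForm.prop p)}

/-- Consistency with respect to propositional logic. -/
def PropConsistent (α : GForm Prp) (B : Set (MForm Prp)) : Prop :=
  (∀ (i : Id) (φ ψ : LForm Prp i), MForm.loc i (LForm.imp φ ψ) ∈ cloSet α →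
      (MForm.loc i (LForm.imp φ ψ) ∈ B ↔ (MForm.loc i (lneg φ) ∈ B ∨ MForm.loc i ψ ∈ B))) ∧
  (∀ γ δ : GForm Prp, MForm.glob (GForm.imp γ δ) ∈ cloSet α →
      (MForm.glob (GForm.imp γ δ) ∈ B ↔ (MForm.glob (gneg γ) ∈ B ∨ MForm.glob δ ∈ B))) ∧
  (∀ x ∈ B, mneg x ∉ B)

/-- Local consistency with respect to the temporal operator `□`. -/
def BoxConsistent (B : Set (MForm Prp)) : Prop :=
  ∀ (i : Id) (φ : LForm Prp i), MForm.loc i (LForm.always φ) ∈ B → MForm.loc i φ ∈ B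

/-- `i`-consistency with respect to global formulas: `@ᵢ[φ] ∈ B` iff `φ ∈ B`,
for every `@ᵢ[φ] ∈ subf(α)`. -/
def IConsistent (α : GForm Prp) (i : Id) (B : Set (MForm Prp)) : Prop :=
  ∀ φ : LForm Prp i, MForm.glob (GForm.atf i φ) ∈ gsubf α →
    (MForm.glob (GForm.atf i φ) ∈ B ↔ MForm.loc i φ ∈ B)

/-- Maximality: for each `γ ∈ cloSet(α)`, if `γ ∉ B` then `¬γ ∈ B`. -/
def MaximalIn (α : GForm Prp) (B : Set (MForm Prp)) : Prop :=
  ∀ x ∈ cloSet α, x ∉ B → mneg x ∈ B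

/-- `B ⊆ cloSet(α)` is `i`-elementary. -/
def IElementary (α : GForm Prp) (i : Id) (B : Set (MForm Prp)) : Prop :=
  B ⊆ cloSet α ∧ PropConsistent α B ∧ MaximalIn α B ∧ BoxConsistent B ∧ IConsistent α i B

/-! ## The local generalized Büchi automata `G i` -/

/-- States of the GNBA `Gᵢ`: the sets `B↓ᵢ` for `i`-elementary `B ⊆ cloSet(α)`. -/
def GnbaState (α : GForm Prp) (i : Id) (B : Set (MForm Prp)) : Prop :=
  ∃ C : Set (MForm Prp), IElementary α i C ∧ B = proj C i

/-- Initial states of `Gᵢ`: states containing `α` and no communication formula. -/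
def GnbaInit (α : GForm Prp) (i : Id) (B : Set (MForm Prp)) : Prop :=
  GnbaState α i B ∧ MForm.glob α ∈ B ∧
    ∀ (j : Id) (φ : LForm Prp j), MForm.loc i (LForm.comm j φ) ∉ B

/-- `B ∩ Litᵢ`, viewed as a set of `i`-local formulas. -/
def BLit (i : Id) (B : Set (MForm Prp)) : Set (LForm Prp i) :=
  {φ | MForm.loc i φ ∈ B ∧ φ ∈ Lit i}

/-- The transition function of `Gᵢ`: `δᵢ(B, v)` is empty unless `v = B ∩ Litᵢ`, and
otherwise consists of the states `B'` such that `○φ ∈ B` iff `φ ∈ B'` and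
`□φ ∈ B` iff (`φ ∈ B` and `□φ ∈ B'`), for formulas in the cloSet of `α`. -/
def GnbaTrans (α : GForm Prp) (i : Id) (B : Set (MForm Prp)) (v : Set (LForm Prp i)) :
    Set (Set (MForm Prp)) :=
  {B' | GnbaState α i B' ∧ v = BLit i B ∧
    (∀ φ : LForm Prp i, MForm.loc i (LForm.next φ) ∈ cloSet α →
        (MForm.loc i (LForm.next φ) ∈ B ↔ MForm.loc i φ ∈ B')) ∧
    (∀ φ : LForm Prp i, MForm.loc i (LForm.always φ) ∈ cloSet α →
        (MForm.loc i (LForm.always φ) ∈ B ↔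
          (MForm.loc i φ ∈ B ∧ MForm.loc i (LForm.always φ) ∈ B')))}

/-- The acceptance set `F_{□φ} = {B | □φ ∈ B or φ ∉ B}` of `Gᵢ`. -/
def FBox (i : Id) (φ : LForm Prp i) : Set (Set (MForm Prp)) :=
  {B | MForm.loc i (LForm.always φ) ∈ B ∨ MForm.loc i φ ∉ B}

/-! ## The distributed automaton `D_α` -/

/-- Global alphabet symbols of `D_α`: for each agent, at most one `i`-valuation
(set of `i`-literals); `GoodSym` expresses nonemptiness. -/
abbrev DSym (Id : Type) (Prp : Id → Type) := ∀ i : Id, Option (Set (LForm Prp i))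

/-- Global alphabet symbols are nonempty. -/
def GoodSym (a : DSym Id Prp) : Prop := ∃ i, a i ≠ none

/-- Condition (LC) on states of `D_α`: if `©ⱼ[φ] ∈ q↓ᵢ` then `φ ∈ q↓ⱼ`. -/
def LC (q : Id → Set (MForm Prp)) : Prop :=
  ∀ (i j : Id) (φ : LForm Prp j), MForm.loc i (LForm.comm j φ) ∈ q i → MForm.loc j φ ∈ q j

/-- The transition relation of `D_α`: componentwise transitions (non-participating
agents do not move), together with the synchronization conditions (SC1) and (SC2). -/
def DTransition (α : GForm Prp) (q q' : Id → Set (MForm Prp)) (a : DSym Id Prp) : Prop :=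
  (∀ i, (a i = none → q' i = q i) ∧ ∀ v, a i = some v → q' i ∈ GnbaTrans α i (q i) v) ∧
  (∀ (i j : Id) (φ : LForm Prp j),
      MForm.loc i (LForm.comm j φ) ∈ q' i → a i ≠ none → a j ≠ none) ∧
  (∀ (i j : Id) (φ : LForm Prp j), MForm.loc i (LForm.comm j φ) ∈ cloSet α →
      a i ≠ none → a j ≠ none → MForm.loc j φ ∈ q' j → MForm.loc i (LForm.comm j φ) ∈ q' i)

/-- A global run for the word `w` in `D_α`: it starts in an initial state, all its states
satisfy (LC), and consecutive states are related by the transition relation. -/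
def DRun (α : GForm Prp) (w : ℕ → DSym Id Prp) (τ : ℕ → Id → Set (MForm Prp)) : Prop :=
  (∀ i, GnbaInit α i (τ 0 i)) ∧ (∀ k, LC (τ k)) ∧
    ∀ k, DTransition α (τ k) (τ (k + 1)) (w k)

/-- A global word is fair if every agent participates in infinitely many of its symbols. -/
def Fair (w : ℕ → DSym Id Prp) : Prop := ∀ i : Id, ∀ N : ℕ, ∃ k, N ≤ k ∧ w k i ≠ none

/-- A global run of `D_α` is accepting if, for each agent `i` and each `□φ ∈ cloSet(α)`,
the acceptance set `F_{□φ}` is visited infinitely often by the `i`-th component. -/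
def DAccepting (α : GForm Prp) (τ : ℕ → Id → Set (MForm Prp)) : Prop :=
  ∀ (i : Id) (φ : LForm Prp i), MForm.loc i (LForm.always φ) ∈ cloSet α →
    ∀ N : ℕ, ∃ k, N ≤ k ∧ τ k i ∈ FBox i φ

/-- The accepted language of `D_α`: fair words (of nonempty symbols) admitting an
accepting run. -/
def DLang (α : GForm Prp) : Set (ℕ → DSym Id Prp) :=
  {w | (∀ k, GoodSym (w k)) ∧ Fair w ∧ ∃ τ, DRun α w τ ∧ DAccepting α τ}

/-! ## The interpretation structure induced by an accepting run -/

/-- The events of agent `i` induced by a word `w`: the positive indices `k` (events `e_k`)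
such that agent `i` participates in `a_{k-1}`. -/
def EvOf (w : ℕ → DSym Id Prp) (i : Id) : Set ℕ :=
  {k | 1 ≤ k ∧ w (k - 1) i ≠ none}

/-- The interpretation structure `μ^τ` induced by a run `τ` for a word `w`:
events are `e_k = k` (`k ≥ 1`), local orders are inherited from `ℕ`, and the labelings
are read off the states of the run (`sSup ∅ = 0` handles the initial state). -/
noncomputable def inducedInterp (w : ℕ → DSym Id Prp) (τ : ℕ → Id → Set (MForm Prp)) :
    PreInterp Id ℕ Prp where
  Ev := EvOf w
  le := fun i k₁ k₂ => k₁ ∈ EvOf w i ∧ k₂ ∈ EvOf w i ∧ k₁ ≤ k₂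
  val := fun i ξ => {p | MForm.loc i (LForm.prop p) ∈ τ (sSup ξ) i}

/-- The `k`-th global state `ξ^k = {e_1, …, e_k}` of the induced interpretation
structure. -/
def xiNat (k : ℕ) : Set ℕ := {m | 1 ≤ m ∧ m ≤ k}

/-! ## Linearizations and induced words -/

/-- The strict global causality relation. -/
def glt (μ : PreInterp Id E Prp) (e e' : E) : Prop := gle μ e e' ∧ e ≠ e'

/-- A linearization of the global causality order of `μ`: a bijection from the positive
naturals onto the set of events, compatible with global causality. -/
def IsLinearization (μ : PreInterp Id E Prp) (ℓ : ℕ → E) : Prop :=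
  Set.InjOn ℓ {k : ℕ | 1 ≤ k} ∧
  (∀ k : ℕ, 1 ≤ k → ℓ k ∈ ⋃ i, μ.Ev i) ∧
  (∀ e ∈ ⋃ i, μ.Ev i, ∃ k : ℕ, 1 ≤ k ∧ ℓ k = e) ∧
  (∀ k₁ k₂ : ℕ, 1 ≤ k₁ → 1 ≤ k₂ → glt μ (ℓ k₁) (ℓ k₂) → k₁ < k₂)

/-- The global state `ξ^k = {ℓ(1), …, ℓ(k)}` induced by a linearization. -/
def xiState (ℓ : ℕ → E) (k : ℕ) : Set E := ℓ '' {m : ℕ | 1 ≤ m ∧ m ≤ k}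

open Classical in
/-- The word `w^{μ,ℓ}` induced by a model `μ` and a linearization `ℓ`:
`a_k` assigns to each agent `i` with `ℓ(k+1) ∈ Evᵢ` the set of `i`-literals true at
`ξ^k|ᵢ`, and nothing to the other agents. -/
noncomputable def inducedWord (μ : PreInterp Id E Prp) (ℓ : ℕ → E) (k : ℕ) : DSym Id Prp :=
  fun i =>
    if ℓ (k + 1) ∈ μ.Ev i then
      some {φ | φ ∈ Lit i ∧ LSat μ i φ (xiState ℓ k ∩ μ.Ev i)}
    else none

/-! ## The canonical run induced by a model -/

open Classical in
/-- The sets `x^i_k` of global formulas in the cloSet of `α` true at `ξ^k`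
(updated only when `last(ξ^k) = ℓ(k) ∈ Evᵢ`). -/
noncomputable def xSet (α : GForm Prp) (μ : PreInterp Id E Prp) (ℓ : ℕ → E) (i : Id) :
    ℕ → Set (MForm Prp)
  | 0 => {x | x ∈ cloSet α ∧ ∃ γ : GForm Prp, x = MForm.glob γ ∧ GSat μ γ (xiState ℓ 0)}
  | k + 1 =>
      if ℓ (k + 1) ∈ μ.Ev i then
        {x | x ∈ cloSet α ∧
          ∃ γ : GForm Prp, x = MForm.glob γ ∧ GSat μ γ (xiState ℓ (k + 1))}
      else xSet α μ ℓ i k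

/-- The sets `y^i_k` of `i`-local formulas in the cloSet of `α` true at `ξ^k|ᵢ`. -/
def ySet (α : GForm Prp) (μ : PreInterp Id E Prp) (ℓ : ℕ → E) (i : Id) (k : ℕ) :
    Set (MForm Prp) :=
  {x | x ∈ cloSet α ∧
    ∃ φ : LForm Prp i, x = MForm.loc i φ ∧ LSat μ i φ (xiState ℓ k ∩ μ.Ev i)}

/-- The canonical run `q_k = ⊗ᵢ (x^i_k ∪ y^i_k)` induced by a model `μ` of `α` and a
linearization `ℓ`. -/
noncomputable def canonRun (α : GForm Prp) (μ : PreInterp Id E Prp) (ℓ : ℕ → E) (k : ℕ) :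
    Id → Set (MForm Prp) :=
  fun i => xSet α μ ℓ i k ∪ ySet α μ ℓ i k

/-! ## Isomorphism of interpretation structures -/

/-- Two interpretation structures are isomorphic if there is a bijection between their
event sets preserving and reflecting global causality and commuting with the labelings
on local states. -/
def Isomorphic {E₁ E₂ : Type} (μ₁ : PreInterp Id E₁ Prp) (μ₂ : PreInterp Id E₂ Prp) :
    Prop :=
  ∃ f : E₁ → E₂,
    Set.BijOn f (⋃ i, μ₁.Ev i) (⋃ i, μ₂.Ev i) ∧
    (∀ e e', e ∈ ⋃ i, μ₁.Ev i → e' ∈ ⋃ i, μ₁.Ev i →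
      (gle μ₁ e e' ↔ gle μ₂ (f e) (f e'))) ∧
    ∀ (i : Id) (ξ : Set E₁), IsLocalState μ₁ i ξ → μ₁.val i ξ = μ₂.val i (f '' ξ)

/-!
Every local state of agent `i` is a cut `ξ^m|ᵢ` of the linearization: it is finite, and
an event of `Evᵢ` preceding one of its members in `ℓ` cannot be `≤ᵢ`-above it, since `ℓ`
respects causality. Hence if `φ` holds at `ξ^k|ᵢ` for all `k ≥ N`, it holds at every local
state extending `ξ^N|ᵢ`, i.e. `□φ` holds at `ξ^N|ᵢ`. So `q_k↓ᵢ` cannot avoid `F_{□φ}` from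
some index on.
-/

lemma loc_not_mem_xSet (α : GForm Prp) (μ : PreInterp Id E Prp) (ℓ : ℕ → E) (i j : Id)
    (ψ : LForm Prp j) (k : ℕ) : MForm.loc j ψ ∉ xSet α μ ℓ i k := by
  induction k with
  | zero => rintro ⟨-, γ, hγ, -⟩; cases hγ
  | succ k ih =>
    rw [xSet]
    split
    · rintro ⟨-, γ, hγ, -⟩; cases hγ
    · exact ih

lemma loc_mem_canonRun_iff (α : GForm Prp) (μ : PreInterp Id E Prp) (ℓ : ℕ → E) (i : Id)
    (ψ : LForm Prp i) (k : ℕ) :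
    MForm.loc i ψ ∈ canonRun α μ ℓ k i ↔
      MForm.loc i ψ ∈ cloSet α ∧ LSat μ i ψ (xiState ℓ k ∩ μ.Ev i) := by
  simp only [canonRun, Set.mem_union, loc_not_mem_xSet, false_or, ySet, Set.mem_ofPred_eq,
    MForm.loc.injEq, true_and, heq_iff_eq, exists_eq_left']

lemma xiState_mono (ℓ : ℕ → E) : Monotone (xiState ℓ) :=
  fun _ _ hmn => Set.image_mono fun _ ⟨h1, hle⟩ => ⟨h1, hle.trans hmn⟩

section LocalStates

variable {μ : PreInterp Id E Prp} {ℓ : ℕ → E} {i : Id} {ξ : Set E}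

lemma IsLocalState.apply_mem_of_le (hμ : IsInterp μ) (hℓ : IsLinearization μ ℓ)
    (hξ : IsLocalState μ i ξ) {j m : ℕ} (hj : 1 ≤ j) (hjm : j ≤ m) (hm : ℓ m ∈ ξ)
    (hji : ℓ j ∈ μ.Ev i) : ℓ j ∈ ξ := by
  rcases hμ.total i (ℓ j) hji (ℓ m) (hξ.2.1 hm) with hle | hle
  · exact hξ.2.2 _ _ hle hm
  · by_cases heq : ℓ m = ℓ j
    · exact heq ▸ hm
    · have := hℓ.2.2.2 m j (hj.trans hjm) hj ⟨.single ⟨i, hle⟩, heq⟩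
      omega

lemma IsLocalState.exists_eq_xiState_inter (hμ : IsInterp μ) (hℓ : IsLinearization μ ℓ)
    (hξ : IsLocalState μ i ξ) : ∃ m, ξ = xiState ℓ m ∩ μ.Ev i := by
  set S : Set ℕ := {k | 1 ≤ k ∧ ℓ k ∈ ξ}
  have hS : S.Finite :=
    Set.Finite.of_finite_image (hξ.1.subset (by rintro _ ⟨k, ⟨-, hk⟩, rfl⟩; exact hk))
      (hℓ.1.mono fun _ hk => hk.1)
  have hindex : ∀ e ∈ ξ, ∃ k ∈ S, ℓ k = e := fun e he => by
    obtain ⟨k, hk, rfl⟩ := hℓ.2.2.1 e (Set.mem_iUnion.2 ⟨i, hξ.2.1 he⟩)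
    exact ⟨k, ⟨hk, he⟩, rfl⟩
  refine ⟨sSup S, Set.Subset.antisymm (fun e he => ?_) ?_⟩
  · obtain ⟨k, hkS, rfl⟩ := hindex e he
    exact ⟨⟨k, ⟨hkS.1, le_csSup hS.bddAbove hkS⟩, rfl⟩, hξ.2.1 he⟩
  · rintro _ ⟨⟨j, ⟨hj, hjm⟩, rfl⟩, hji⟩
    have hSne : S.Nonempty := by
      by_contra hempty
      rw [Set.not_nonempty_iff_eq_empty.1 hempty, csSup_empty, Nat.bot_eq_zero] at hjm
      omega
    exact hξ.apply_mem_of_le hμ hℓ hj hjm (Nat.sSup_mem hSne hS.bddAbove).2 hji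

lemma LSat_always_xiState_of_forall_le (hμ : IsInterp μ) (hℓ : IsLinearization μ ℓ)
    {φ : LForm Prp i} {N : ℕ} (hφ : ∀ k, N ≤ k → LSat μ i φ (xiState ℓ k ∩ μ.Ev i)) :
    LSat μ i (LForm.always φ) (xiState ℓ N ∩ μ.Ev i) := by
  intro ξ hξ hNξ
  obtain ⟨m, rfl⟩ := hξ.exists_eq_xiState_inter hμ hℓ
  rcases le_total N m with hNm | hmN
  · exact hφ m hNm
  · have hcut : xiState ℓ m ∩ μ.Ev i = xiState ℓ N ∩ μ.Ev i :=
      Set.Subset.antisymm (Set.inter_subset_inter_left _ (xiState_mono ℓ hmN)) hNξ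
    exact hcut ▸ hφ N le_rfl

end LocalStates

theorem canonical_run_accepting_general
    {Id : Type} {Prp : Id → Type} {E : Type}
    (α : GForm Prp) (μ : PreInterp Id E Prp) (hμ : μ ∈ ModelsOf α)
    (ℓ : ℕ → E) (hℓ : IsLinearization μ ℓ)
    (i : Id) (φ : LForm Prp i) (hφ : MForm.loc i (LForm.always φ) ∈ cloSet α) :
    ∀ N : ℕ, ∃ k, N ≤ k ∧ canonRun α μ ℓ k i ∈ FBox i φ := by
  intro N
  by_contra! hnot
  simp only [FBox, Set.mem_ofPred_eq, not_or, not_not] at hnot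
  have hφ_from_N : ∀ k, N ≤ k → LSat μ i φ (xiState ℓ k ∩ μ.Ev i) := fun k hk =>
    ((loc_mem_canonRun_iff α μ ℓ i φ k).1 (hnot k hk).2).2
  have hbox := LSat_always_xiState_of_forall_le hμ.1 hℓ hφ_from_N
  exact (hnot N le_rfl).1 ((loc_mem_canonRun_iff α μ ℓ i _ N).2 ⟨hφ, hbox⟩)

/-- given a model `μ` of `α`, a linearization `ℓ`, and the canonical
run `q_k` with `q_k↓ᵢ = x^i_k ∪ y^i_k` for `w^{μ,ℓ}` in `D_α`, for every agent `i` and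
every formula `□φ ∈ closure(α) ∩ Lᵢ` there are infinitely many indices `k` with
`q_k↓ᵢ ∈ F_{□φ}`; consequently each local projected run is accepting in `Gᵢ`. -/
theorem canonical_run_accepting
    {Id : Type} [Fintype Id] [Nonempty Id] {Prp : Id → Type} {E : Type}
    (α : GForm Prp) (μ : PreInterp Id E Prp) (hμ : μ ∈ ModelsOf α)
    (ℓ : ℕ → E) (hℓ : IsLinearization μ ℓ)
    (i : Id) (φ : LForm Prp i) (hφ : MForm.loc i (LForm.always φ) ∈ cloSet α) :
    ∀ N : ℕ, ∃ k, N ≤ k ∧ canonRun α μ ℓ k i ∈ FBox i φ :=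
  canonical_run_accepting_general α μ hμ ℓ hℓ i φ hφ
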